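/- arXiv:1903.08568 — 2 statements merged into one kernel-verified Lean document; each statement's English description precedes it below -/
import Mathlib

section
/- Suppose ν is a smooth strictly positive probability density on ℝⁿ satisfying the log-Sobolev inequality with constant α > 0, and let q ≥ 1. Then for every smooth strictly positive probability density ρ on ℝⁿ, G_{q,ν}(ρ) / F_{q,ν}(ρ) ≥ (2α/q²) R_{q,ν}(ρ). -/
open MeasureTheory Real


noncomputable section

/-- KL divergence `H_ν(ρ) = ∫ ρ log(ρ/ν)`. -/
def KLdiv {n : ℕ} (ρ ν : EuclideanSpace ℝ (Fin n) → ℝ) : ℝ :=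
  ∫ x, ρ x * Real.log (ρ x / ν x)

/-- Relative Fisher information `J_ν(ρ)`. -/
def fisherInfo {n : ℕ} (ρ ν : EuclideanSpace ℝ (Fin n) → ℝ) : ℝ :=
  ∫ x, ρ x * ‖gradient (fun y => Real.log (ρ y / ν y)) x‖ ^ 2

/-- A smooth, strictly positive probability density on ℝⁿ. -/
def IsDensity {n : ℕ} (ρ : EuclideanSpace ℝ (Fin n) → ℝ) : Prop :=
  ContDiff ℝ (⊤ : ℕ∞) ρ ∧ (∀ x, 0 < ρ x) ∧ (∫ x, ρ x) = 1

/-- The log-Sobolev inequality with constant `α` for the density `ν`. -/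
def LogSobolev {n : ℕ} (ν : EuclideanSpace ℝ (Fin n) → ℝ) (α : ℝ) : Prop :=
  ∀ g : EuclideanSpace ℝ (Fin n) → ℝ, ContDiff ℝ (⊤ : ℕ∞) g →
    Integrable (fun x => g x ^ 2 * ν x) →
    (∫ x, (g x ^ 2 * Real.log (g x ^ 2)) * ν x)
        - (∫ x, g x ^ 2 * ν x) * Real.log (∫ x, g x ^ 2 * ν x)
      ≤ (2 / α) * ∫ x, ‖gradient g x‖ ^ 2 * ν x

/-- The Poincaré inequality with constant `α` for the density `ν`. -/
def PoincareIneq {n : ℕ} (ν : EuclideanSpace ℝ (Fin n) → ℝ) (α : ℝ) : Prop :=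
  ∀ g : EuclideanSpace ℝ (Fin n) → ℝ, ContDiff ℝ (⊤ : ℕ∞) g →
    (∫ x, g x ^ 2 * ν x) - (∫ x, g x * ν x) ^ 2
      ≤ (1 / α) * ∫ x, ‖gradient g x‖ ^ 2 * ν x

/-- `f` is `L`-smooth: twice continuously differentiable with `−L·I ≼ ∇²f ≼ L·I`. -/
def LSmooth {n : ℕ} (f : EuclideanSpace ℝ (Fin n) → ℝ) (L : ℝ) : Prop :=
  ContDiff ℝ 2 f ∧ ∀ x v, |iteratedFDeriv ℝ 2 f x ![v, v]| ≤ L * ‖v‖ ^ 2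

/-- Gaussian density with mean `m` and covariance `σ2 • I`. -/
def gaussDensity {n : ℕ} (m : EuclideanSpace ℝ (Fin n)) (σ2 : ℝ)
    (x : EuclideanSpace ℝ (Fin n)) : ℝ :=
  (2 * Real.pi * σ2) ^ (-(n : ℝ) / 2) * Real.exp (-‖x - m‖ ^ 2 / (2 * σ2))

/-- One step of ULA with step size `ε` acting on laws:
`ρ ↦ ((id − ε∇f)_# ρ) ∗ N(0, 2εI)`, written via the transition density. -/
def ULAstep {n : ℕ} (f : EuclideanSpace ℝ (Fin n) → ℝ) (ε : ℝ)
    (ρ : EuclideanSpace ℝ (Fin n) → ℝ) : EuclideanSpace ℝ (Fin n) → ℝ :=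
  fun y => ∫ x, ρ x * gaussDensity (x - ε • gradient f x) (2 * ε) y

/-- `F_{q,ν}(ρ) = ∫ ρ^q / ν^{q−1}`. -/
def RenyiF {n : ℕ} (q : ℝ) (ρ ν : EuclideanSpace ℝ (Fin n) → ℝ) : ℝ :=
  ∫ x, ρ x ^ q / ν x ^ (q - 1)

/-- Rényi divergence `R_{q,ν}(ρ)`; for `q = 1` it is the KL divergence. -/
def RenyiDiv {n : ℕ} (q : ℝ) (ρ ν : EuclideanSpace ℝ (Fin n) → ℝ) : ℝ :=
  if q = 1 then KLdiv ρ ν else (q - 1)⁻¹ * Real.log (RenyiF q ρ ν)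

/-- Rényi information `G_{q,ν}(ρ) = ∫ ν (ρ/ν)^q ‖∇ log(ρ/ν)‖²`. -/
def RenyiG {n : ℕ} (q : ℝ) (ρ ν : EuclideanSpace ℝ (Fin n) → ℝ) : ℝ :=
  ∫ x, ν x * (ρ x / ν x) ^ q * ‖gradient (fun y => Real.log (ρ y / ν y)) x‖ ^ 2

/-- Divergence of a vector field on ℝⁿ. -/
def diverg {n : ℕ} (v : EuclideanSpace ℝ (Fin n) → EuclideanSpace ℝ (Fin n))
    (x : EuclideanSpace ℝ (Fin n)) : ℝ :=
  ∑ i, fderiv ℝ v x (EuclideanSpace.single i 1) i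

/-- The family `(ρ_t)_{t ≥ 0}` satisfies the Fokker–Planck equation
`∂ρ_t/∂t = ∇·(ρ_t ∇ log(ρ_t/ν))` for the Langevin dynamics targeting `ν`. -/
def FokkerPlanck {n : ℕ} (ν : EuclideanSpace ℝ (Fin n) → ℝ)
    (ρ : ℝ → EuclideanSpace ℝ (Fin n) → ℝ) : Prop :=
  ∀ t, 0 ≤ t → ∀ x, HasDerivAt (fun s => ρ s x)
    (diverg (fun y => ρ t y • gradient (fun z => Real.log (ρ t z / ν z)) y) x) t


/-- Lemma `Lem:RenyiLSI`: under LSI,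
`G_{q,ν}(ρ)/F_{q,ν}(ρ) ≥ (2α/q²) R_{q,ν}(ρ)`. -/
theorem renyi_lsi_bound {n : ℕ} (ν : EuclideanSpace ℝ (Fin n) → ℝ) (α q : ℝ)
    (hα : 0 < α) (hq : 1 ≤ q) (hν : IsDensity ν) (hLSI : LogSobolev ν α) :
    ∀ ρ : EuclideanSpace ℝ (Fin n) → ℝ, IsDensity ρ →
      RenyiG q ρ ν / RenyiF q ρ ν ≥ (2 * α / q ^ 2) * RenyiDiv q ρ ν := by
  obtain ⟨hνs, hνpos, hνint⟩ := hν
  intro ρ hρ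
  obtain ⟨hρs, hρpos, hρint⟩ := hρ
  have hq0 : (0:ℝ) < q := lt_of_lt_of_le one_pos hq
  have hρInt : Integrable ρ := by
    by_contra h
    rw [integral_undef h] at hρint
    norm_num at hρint
  have hhpos : ∀ x, 0 < ρ x / ν x := fun x => div_pos (hρpos x) (hνpos x)
  -- the test function g = (ρ/ν)^{q/2}, written via exp/log so that analyticity is easy
  set g : EuclideanSpace ℝ (Fin n) → ℝ :=
    fun x => rexp ((q / 2) * Real.log (ρ x / ν x)) with hgdef
  have hgpos : ∀ x, 0 < g x := fun x => exp_pos _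
  have hg2 : ∀ x, g x ^ 2 = (ρ x / ν x) ^ q := by
    intro x
    rw [hgdef, sq, ← Real.exp_add, Real.rpow_def_of_pos (hhpos x)]
    congr 1
    ring
  -- smoothness of g
  have hgs : ContDiff ℝ (⊤ : ℕ∞) g := by
    rw [contDiff_iff_contDiffAt]
    intro x
    have h1 : ContDiffAt ℝ (⊤ : ℕ∞) (fun y => ρ y / ν y) x :=
      (hρs.contDiffAt).div (hνs.contDiffAt) (hνpos x).ne'
    have h2 : ContDiffAt ℝ (⊤ : ℕ∞) (fun y => Real.log (ρ y / ν y)) x :=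
      h1.log (hhpos x).ne'
    exact Real.contDiff_exp.contDiffAt.comp x (contDiffAt_const.mul h2)
  -- gradient formula for g
  have hgradval : ∀ x, gradient g x
      = (g x * (q / 2)) • gradient (fun y => Real.log (ρ y / ν y)) x := by
    intro x
    have hL : DifferentiableAt ℝ (fun y => Real.log (ρ y / ν y)) x :=
      ContDiffAt.differentiableAt
        (((hρs.contDiffAt).div (hνs.contDiffAt) (hνpos x).ne').log (hhpos x).ne') (by simp)
    have h1 : HasFDerivAt (fun y => Real.log (ρ y / ν y))
        (InnerProductSpace.toDual ℝ _ (gradient (fun y => Real.log (ρ y / ν y)) x)) x :=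
      hL.hasGradientAt.hasFDerivAt
    have h2 := h1.const_mul (q / 2)
    have h3 := (Real.hasDerivAt_exp ((q / 2) * Real.log (ρ x / ν x))).comp_hasFDerivAt x h2
    have h4 : HasFDerivAt g
        (InnerProductSpace.toDual ℝ _
          ((g x * (q / 2)) • gradient (fun y => Real.log (ρ y / ν y)) x)) x := by
      have heq : rexp ((q / 2) * Real.log (ρ x / ν x)) • ((q / 2) •
            (InnerProductSpace.toDual ℝ _ (gradient (fun y => Real.log (ρ y / ν y)) x)))
          = InnerProductSpace.toDual ℝ _
            ((g x * (q / 2)) • gradient (fun y => Real.log (ρ y / ν y)) x) := by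
        rw [_root_.map_smul, smul_smul]
      rw [← heq]
      exact h3
    have h5 := h4.hasGradientAt
    rw [LinearIsometryEquiv.symm_apply_apply] at h5
    exact h5.gradient
  -- pointwise identity between the LSI Dirichlet integrand and the Renyi information integrand
  have hkey : (fun x => ‖gradient g x‖ ^ 2 * ν x)
      = fun x => q ^ 2 / 4 *
          (ν x * (ρ x / ν x) ^ q * ‖gradient (fun y => Real.log (ρ y / ν y)) x‖ ^ 2) := by
    funext x
    rw [hgradval x, norm_smul, Real.norm_eq_abs, mul_pow, sq_abs, ← hg2 x]
    ring
  -- pointwise identity for the F-integrand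
  have hbridgeF : ∀ x, ρ x ^ q / ν x ^ (q - 1) = g x ^ 2 * ν x := by
    intro x
    have hν0 : ν x ≠ 0 := (hνpos x).ne'
    have hνq : (0:ℝ) < ν x ^ q := Real.rpow_pos_of_pos (hνpos x) q
    rw [hg2 x, Real.div_rpow (hρpos x).le (hνpos x).le, Real.rpow_sub (hνpos x), Real.rpow_one]
    field_simp
  -- nonnegativity of RenyiG
  have hRGnn : 0 ≤ RenyiG q ρ ν := by
    apply integral_nonneg
    intro x
    exact mul_nonneg (mul_nonneg (hνpos x).le (Real.rpow_nonneg (hhpos x).le q)) (sq_nonneg _)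
  by_cases hq1 : q = 1
  · -- KL case
    subst hq1
    have e1 : ∀ x, g x ^ 2 * ν x = ρ x := by
      intro x
      rw [hg2 x, Real.rpow_one, div_mul_cancel₀ _ (hνpos x).ne']
    have hIg : Integrable (fun x => g x ^ 2 * ν x) := by
      rw [show (fun x => g x ^ 2 * ν x) = ρ from funext e1]
      exact hρInt
    have key := hLSI g hgs hIg
    have hFval : (∫ x, g x ^ 2 * ν x) = 1 := by
      rw [show (fun x => g x ^ 2 * ν x) = ρ from funext e1]
      exact hρint
    have hVval : (∫ x, (g x ^ 2 * Real.log (g x ^ 2)) * ν x) = KLdiv ρ ν := by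
      rw [KLdiv]
      congr 1
      funext x
      rw [hg2 x, Real.rpow_one]
      have hν0 : ν x ≠ 0 := (hνpos x).ne'
      rw [mul_comm (ρ x / ν x) (Real.log (ρ x / ν x)), mul_assoc,
        div_mul_cancel₀ _ hν0, mul_comm]
    have hGval : (∫ x, ‖gradient g x‖ ^ 2 * ν x) = (1:ℝ) ^ 2 / 4 * RenyiG 1 ρ ν := by
      rw [hkey, integral_const_mul, RenyiG]
    rw [hFval, hVval, hGval] at key
    have hRF : RenyiF 1 ρ ν = 1 := by
      rw [RenyiF]
      have : (fun x => ρ x ^ (1:ℝ) / ν x ^ ((1:ℝ) - 1)) = ρ := by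
        funext x
        norm_num [Real.rpow_one]
      rw [this]
      exact hρint
    rw [RenyiDiv, if_pos rfl, hRF, div_one]
    have hαinv : α * (2 / α * ((1:ℝ) ^ 2 / 4 * RenyiG 1 ρ ν)) = RenyiG 1 ρ ν / 2 := by
      field_simp
      ring
    simp only [Real.log_one, mul_zero, sub_zero, one_mul] at key
    have := mul_le_mul_of_nonneg_left key hα.le
    rw [hαinv] at this
    -- this : α * KLdiv ρ ν ≤ RenyiG 1 ρ ν / 2
    have hgoal : 2 * α / 1 ^ 2 * KLdiv ρ ν ≤ RenyiG 1 ρ ν := by nlinarith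
    exact hgoal
  · -- q > 1, Renyi case
    have hq1' : (1:ℝ) < q := hq.lt_of_ne (Ne.symm hq1)
    rw [RenyiDiv, if_neg hq1]
    by_cases hu : Integrable (fun x => g x ^ 2 * ν x)
    · -- F-integrand integrable
      have hRF : RenyiF q ρ ν = ∫ x, g x ^ 2 * ν x := by
        rw [RenyiF]
        exact integral_congr_ae (ae_of_all _ hbridgeF)
      set F := ∫ x, g x ^ 2 * ν x with hFdef
      clear_value F
      have hvolne : (volume : Measure (EuclideanSpace ℝ (Fin n))) ≠ 0 := by
        intro h
        rw [h, integral_zero_measure] at hρint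
        norm_num at hρint
      have hFpos : 0 < F := by
        rw [hFdef, integral_pos_iff_support_of_nonneg
          (fun x => mul_nonneg (sq_nonneg _) (hνpos x).le) hu]
        rw [show Function.support (fun x => g x ^ 2 * ν x) = Set.univ from
          Set.eq_univ_iff_forall.mpr fun x =>
            (mul_pos (pow_pos (hgpos x) 2) (hνpos x)).ne']
        exact Measure.measure_univ_pos.mpr hvolne
      have key := hLSI g hgs hu
      rw [← hFdef] at key
      have hGG : (∫ x, ‖gradient g x‖ ^ 2 * ν x) = q ^ 2 / 4 * RenyiG q ρ ν := by
        rw [hkey, integral_const_mul, RenyiG]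
      rw [hGG] at key
      by_cases hv : Integrable (fun x => (g x ^ 2 * Real.log (g x ^ 2)) * ν x)
      · -- Jensen case
        -- shared pointwise identities
        have hρh : ∀ x, ρ x * (ρ x / ν x) ^ (q - 1) = g x ^ 2 * ν x := by
          intro x
          rw [hg2 x,
            show (ρ x / ν x) ^ q = (ρ x / ν x) ^ (q - 1) * (ρ x / ν x) from by
              rw [← Real.rpow_add_one (hhpos x).ne' (q - 1)]; norm_num]
          have hν0 : ν x ≠ 0 := (hνpos x).ne'
          field_simp
        set μρ : Measure (EuclideanSpace ℝ (Fin n)) :=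
          volume.withDensity (fun x => ((ρ x).toNNReal : ENNReal)) with hμdef
        have hρmeas : Measurable fun x => (ρ x).toNNReal :=
          (hρs.continuous.measurable).real_toNNReal
        have hprob : IsProbabilityMeasure μρ := by
          constructor
          rw [hμdef, withDensity_apply _ MeasurableSet.univ, setLIntegral_univ]
          have h1 : ∫⁻ x, (((ρ x).toNNReal : ENNReal)) = ENNReal.ofReal (∫ x, ρ x) := by
            rw [MeasureTheory.ofReal_integral_eq_lintegral_ofReal hρInt
              (ae_of_all _ fun x => (hρpos x).le)]
            rfl
          rw [h1, hρint]
          simp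
        set f : EuclideanSpace ℝ (Fin n) → ℝ := fun x => (ρ x / ν x) ^ (q - 1) with hfdef
        have e2 : (fun x => (ρ x).toNNReal • f x) = fun x => g x ^ 2 * ν x := by
          funext x
          rw [NNReal.smul_def, Real.coe_toNNReal _ (hρpos x).le, smul_eq_mul, hfdef]
          exact hρh x
        have e3 : (fun x => (ρ x).toNNReal • ((fun y => y * Real.log y) ∘ f) x)
            = fun x => (q - 1) / q * ((g x ^ 2 * Real.log (g x ^ 2)) * ν x) := by
          funext x
          rw [NNReal.smul_def, Real.coe_toNNReal _ (hρpos x).le, smul_eq_mul]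
          simp only [Function.comp]
          rw [hfdef]
          have hlog1 : Real.log ((ρ x / ν x) ^ (q - 1)) = (q - 1) * Real.log (ρ x / ν x) :=
            Real.log_rpow (hhpos x) _
          have hlog2 : Real.log (g x ^ 2) = q * Real.log (ρ x / ν x) := by
            rw [hg2 x]
            exact Real.log_rpow (hhpos x) _
          have h5 := hρh x
          rw [hlog1, hlog2]
          have hqne : q ≠ 0 := hq0.ne'
          field_simp
          linear_combination (Real.log (ρ x / ν x)) * h5
        have hfmem : ∀ᵐ x ∂μρ, f x ∈ Set.Ici (0:ℝ) :=
          ae_of_all _ fun x => Real.rpow_nonneg (hhpos x).le _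
        have hfi : Integrable f μρ := by
          rw [hμdef, integrable_withDensity_iff_integrable_smul hρmeas, e2]
          exact hu
        have hgi : Integrable ((fun y => y * Real.log y) ∘ f) μρ := by
          rw [hμdef, integrable_withDensity_iff_integrable_smul hρmeas, e3]
          exact hv.const_mul _
        have hJen := Real.convexOn_mul_log.map_average_le
          Real.continuous_mul_log.continuousOn isClosed_Ici hfmem hfi hgi
        rw [MeasureTheory.average_eq_integral, MeasureTheory.average_eq_integral] at hJen
        have hIf : (∫ x, f x ∂μρ) = F := by
          rw [hμdef, integral_withDensity_eq_integral_smul hρmeas, e2, hFdef]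
        have hIφ : (∫ x, ((fun y => y * Real.log y) ∘ f) x ∂μρ)
            = (q - 1) / q * (∫ x, (g x ^ 2 * Real.log (g x ^ 2)) * ν x) := by
          rw [hμdef, integral_withDensity_eq_integral_smul hρmeas, e3, integral_const_mul]
        rw [hIf] at hJen
        have hJ : F * Real.log F
            ≤ (q - 1) / q * (∫ x, (g x ^ 2 * Real.log (g x ^ 2)) * ν x) := by
          have : (∫ x, ((fun y => y * Real.log y) ∘ f) x ∂μρ)
              = ∫ x, f x * Real.log (f x) ∂μρ := rfl
          rw [← hIφ]
          exact hJen
        -- combine with key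
        set V := ∫ x, (g x ^ 2 * Real.log (g x ^ 2)) * ν x with hVdef
        clear_value V
        -- key : V - F * log F ≤ 2 / α * (q^2/4 * RenyiG q ρ ν)
        -- hJ : F * log F ≤ (q-1)/q * V
        rw [ge_iff_le, hRF, le_div_iff₀ hFpos]
        -- goal : 2 * α / q ^ 2 * ((q - 1)⁻¹ * Real.log F) * F ≤ RenyiG q ρ ν
        have hq1pos : (0:ℝ) < q - 1 := by linarith
        have hstep1 : (q - 1)⁻¹ * (F * Real.log F) ≤ V / q := by
          have := mul_le_mul_of_nonneg_left hJ (inv_nonneg.mpr hq1pos.le)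
          calc (q - 1)⁻¹ * (F * Real.log F) ≤ (q - 1)⁻¹ * ((q - 1) / q * V) := this
            _ = V / q := by field_simp
        have hstep2 : V / q ≤ V - F * Real.log F := by
          have h6 : F * Real.log F ≤ (q - 1) / q * V := hJ
          have h7 : (q - 1) / q * V + V / q = V := by field_simp; ring
          linarith
        have hstep3 : (q - 1)⁻¹ * (F * Real.log F) ≤ 2 / α * (q ^ 2 / 4 * RenyiG q ρ ν) :=
          le_trans hstep1 (le_trans hstep2 key)
        have hmul := mul_le_mul_of_nonneg_left hstep3 (by positivity : (0:ℝ) ≤ 2 * α / q ^ 2)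
        have hript : 2 * α / q ^ 2 * (2 / α * (q ^ 2 / 4 * RenyiG q ρ ν)) = RenyiG q ρ ν := by
          field_simp
          ring
        rw [hript] at hmul
        calc 2 * α / q ^ 2 * ((q - 1)⁻¹ * Real.log F) * F
            = 2 * α / q ^ 2 * ((q - 1)⁻¹ * (F * Real.log F)) := by ring
          _ ≤ RenyiG q ρ ν := hmul
      · -- entropy integrand not integrable: contradiction via scaling
        exfalso
        set GG := q ^ 2 / 4 * RenyiG q ρ ν with hGGdef
        clear_value GG
        have hGGnn : 0 ≤ GG := by
          rw [hGGdef]; positivity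
        set r := (- Real.log F - (2 / α) * GG / F - 1) / 2 with hrdef
        clear_value r
        set c := rexp r with hcdef
        have hc : 0 < c := by rw [hcdef]; exact exp_pos r
        clear_value c
        have hgs' : ContDiff ℝ (⊤ : ℕ∞) (fun x => c * g x) := contDiff_const.mul hgs
        have hsq : (fun x => (c * g x) ^ 2 * ν x) = fun x => c ^ 2 * (g x ^ 2 * ν x) := by
          funext x; ring
        have hu' : Integrable (fun x => (c * g x) ^ 2 * ν x) := by
          rw [hsq]; exact hu.const_mul _
        have key' := hLSI _ hgs' hu'
        have hT2 : (∫ x, (c * g x) ^ 2 * ν x) = c ^ 2 * F := by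
          rw [hsq, integral_const_mul, hFdef]
        have hT1 : (∫ x, ((c * g x) ^ 2 * Real.log ((c * g x) ^ 2)) * ν x) = 0 := by
          apply integral_undef
          intro hI
          apply hv
          have hc2ne : (c:ℝ) ^ 2 ≠ 0 := by positivity
          have hEq : (fun x => (g x ^ 2 * Real.log (g x ^ 2)) * ν x)
              = fun x => (1 / c ^ 2) * (((c * g x) ^ 2 * Real.log ((c * g x) ^ 2)) * ν x)
                  - Real.log (c ^ 2) * (g x ^ 2 * ν x) := by
            funext x
            have hg2ne : g x ^ 2 ≠ 0 := by have := hgpos x; positivity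
            rw [mul_pow, Real.log_mul hc2ne hg2ne]
            field_simp
            ring
          rw [hEq]
          exact ((hI.const_mul _).sub (hu.const_mul _))
        have hgrad' : ∀ x, gradient (fun y => c * g y) x = c • gradient g x := by
          intro x
          have h1 : HasGradientAt g (gradient g x) x :=
            ((hgs.differentiable (by simp)) x).hasGradientAt
          have h2 := h1.hasFDerivAt.const_mul c
          rw [← _root_.map_smul] at h2
          have h3 := h2.hasGradientAt
          rw [LinearIsometryEquiv.symm_apply_apply] at h3
          exact h3.gradient
        have hT3 : (∫ x, ‖gradient (fun y => c * g y) x‖ ^ 2 * ν x)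
            = c ^ 2 * GG := by
          have : (fun x => ‖gradient (fun y => c * g y) x‖ ^ 2 * ν x)
              = fun x => c ^ 2 * (‖gradient g x‖ ^ 2 * ν x) := by
            funext x
            rw [hgrad' x, norm_smul, Real.norm_eq_abs, mul_pow, sq_abs]
            ring
          rw [this, integral_const_mul, hGG]
        rw [hT1, hT2, hT3] at key'
        have hlogc : Real.log (c ^ 2 * F) = 2 * r + Real.log F := by
          rw [Real.log_mul (by positivity) hFpos.ne', Real.log_pow, hcdef, Real.log_exp]
          push_cast
          ring
        rw [hlogc] at key'
        have hID : 2 * r + Real.log F = -((2 / α) * GG / F) - 1 := by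
          rw [hrdef]; ring
        rw [hID] at key'
        -- key' : 0 - c^2 * F * (-((2/α)*GG/F) - 1) ≤ c^2 * ((2/α)*GG)
        have hFX : F * ((2 / α) * GG / F) = (2 / α) * GG := by
          field_simp
        have hc2pos : (0:ℝ) < c ^ 2 := by positivity
        have hexp : 0 - c ^ 2 * F * (-((2 / α) * GG / F) - 1)
            = c ^ 2 * (F * ((2 / α) * GG / F)) + c ^ 2 * F := by ring
        rw [hexp, hFX] at key'
        -- key' : c^2 * (2/α*GG) + c^2*F ≤ 2/α * (c^2*GG)
        have hlin : c ^ 2 * ((2 / α) * GG) = 2 / α * (c ^ 2 * GG) := by ring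
        rw [hlin] at key'
        linarith [mul_pos hc2pos hFpos]
    · -- F-integrand not integrable: both sides are junk 0
      have hRF0 : RenyiF q ρ ν = 0 := by
        rw [RenyiF]
        apply integral_undef
        intro hI
        exact hu (hI.congr (ae_of_all _ fun x => hbridgeF x))
      rw [hRF0, div_zero, Real.log_zero, mul_zero, mul_zero]
end
end

section
/- Suppose ν = e^{-f} is a probability density on ℝⁿ with f L-smooth, and let x* be a stationary point of f (i.e., ∇f(x*) = 0). Let ρ be the Gaussian density N(x*, (1/L)·I). Then H_ν(ρ) ≤ f(x*) + (n/2) log(L/(2π)). -/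
open MeasureTheory Real


noncomputable section

-- Auxiliary lemmas
theorem gint {n : ℕ} {b : ℝ} (hb : 0 < b) :
    Integrable (fun v : EuclideanSpace ℝ (Fin n) => rexp (- b * ‖v‖^2)) := by
  have h := (GaussianFourier.integrable_cexp_neg_mul_sq_norm_add (V := EuclideanSpace ℝ (Fin n))
    (b := (b:ℂ)) (by simpa using hb) 0 0).re
  refine h.congr (Filter.Eventually.of_forall fun x => ?_)
  have : (-(b:ℂ) * (‖x‖:ℂ)^2 + 0 * ((inner ℝ (0: EuclideanSpace ℝ (Fin n)) x : ℝ) : ℂ))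
      = ((-b*‖x‖^2 : ℝ):ℂ) := by push_cast; ring
  simp only [this]
  exact Complex.exp_ofReal_re _

theorem gint2 {n : ℕ} {b : ℝ} (hb : 0 < b) :
    Integrable (fun v : EuclideanSpace ℝ (Fin n) => ‖v‖^2 * rexp (- b * ‖v‖^2)) := by
  have h2 : (0:ℝ) < b/2 := by linarith
  refine ((gint h2).const_mul (2/b)).mono ?_ (Filter.Eventually.of_forall fun x => ?_)
  · exact (Continuous.mul (by continuity) (by continuity)).aestronglyMeasurable
  · have hx : (0:ℝ) ≤ ‖x‖^2 := by positivity
    rw [Real.norm_eq_abs, Real.norm_eq_abs, abs_of_nonneg (by positivity), abs_of_nonneg (by positivity)]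
    have key : (b/2) * ‖x‖^2 ≤ rexp ((b/2) * ‖x‖^2) := le_trans (by linarith) (Real.add_one_le_exp _)
    have : ‖x‖^2 ≤ (2/b) * rexp ((b/2) * ‖x‖^2) := by
      have h2b : (0:ℝ) < 2/b := by positivity
      calc ‖x‖^2 = (2/b) * ((b/2) * ‖x‖^2) := by field_simp
        _ ≤ (2/b) * rexp ((b/2) * ‖x‖^2) := mul_le_mul_of_nonneg_left key h2b.le
    calc ‖x‖^2 * rexp (-b * ‖x‖^2) ≤ ((2/b) * rexp ((b/2) * ‖x‖^2)) * rexp (-b*‖x‖^2) := by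
          exact mul_le_mul_of_nonneg_right this (Real.exp_pos _).le
      _ = (2/b) * rexp (-(b/2) * ‖x‖^2) := by rw [mul_assoc, ← Real.exp_add]; ring_nf

open intervalIntegral in
theorem taylor_bound {n : ℕ} (f : EuclideanSpace ℝ (Fin n) → ℝ) (L : ℝ)
    (hf : ContDiff ℝ 2 f)
    (hb : ∀ x v, |iteratedFDeriv ℝ 2 f x ![v, v]| ≤ L * ‖v‖ ^ 2)
    (hL : 0 ≤ L) (xstar : EuclideanSpace ℝ (Fin n)) (hstar : fderiv ℝ f xstar = 0)
    (x : EuclideanSpace ℝ (Fin n)) :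
    |f x - f xstar| ≤ L / 2 * ‖x - xstar‖ ^ 2 := by
  set v := x - xstar with hv
  have hfd : Differentiable ℝ f := hf.differentiable (by norm_num)
  have hf' : ContDiff ℝ 1 (fderiv ℝ f) := hf.fderiv_right (by norm_num)
  have hline : ∀ t : ℝ, HasDerivAt (fun s : ℝ => xstar + s • v) v t := by
    intro t
    simpa using ((hasDerivAt_id t).smul_const v).const_add xstar
  -- φ
  have hφ : ∀ t : ℝ, HasDerivAt (fun s : ℝ => f (xstar + s • v))
      (fderiv ℝ f (xstar + t • v) v) t := fun t =>
    (hfd (xstar + t • v)).hasFDerivAt.comp_hasDerivAt t (hline t)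
  -- ψ
  set ψ : ℝ → ℝ := fun t => fderiv ℝ f (xstar + t • v) v with hψdef
  have hA : ∀ t : ℝ, HasDerivAt (fun s : ℝ => fderiv ℝ f (xstar + s • v))
      (fderiv ℝ (fderiv ℝ f) (xstar + t • v) v) t := fun t =>
    ((hf'.differentiable one_ne_zero) (xstar + t • v)).hasFDerivAt.comp_hasDerivAt t (hline t)
  have hψ : ∀ t : ℝ, HasDerivAt ψ (fderiv ℝ (fderiv ℝ f) (xstar + t • v) v v) t := by
    intro t
    simpa using (hA t).clm_apply (hasDerivAt_const t v)
  have hbd : ∀ t : ℝ, |fderiv ℝ (fderiv ℝ f) (xstar + t • v) v v| ≤ L * ‖v‖ ^ 2 := by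
    intro t
    have := hb (xstar + t • v) v
    rwa [iteratedFDeriv_two_apply] at this
  have hψ0 : ψ 0 = 0 := by simp [hψdef, hstar]
  -- |ψ t| ≤ L‖v‖² * |t|
  have hlin : ∀ t : ℝ, |ψ t| ≤ L * ‖v‖ ^ 2 * |t| := by
    intro t
    have := (convex_univ (𝕜 := ℝ) (E := ℝ)).norm_image_sub_le_of_norm_hasDerivWithin_le
      (f := ψ) (f' := fun s => fderiv ℝ (fderiv ℝ f) (xstar + s • v) v v)
      (fun s _ => (hψ s).hasDerivWithinAt) (fun s _ => by
        simpa [Real.norm_eq_abs] using hbd s) (Set.mem_univ 0) (Set.mem_univ t)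
    simpa [hψ0, Real.norm_eq_abs] using this
  have hψcont : Continuous ψ := by
    rw [continuous_iff_continuousAt]; exact fun t => (hψ t).continuousAt
  -- fundamental theorem of calculus
  have hftc : f x - f xstar = ∫ t in (0:ℝ)..1, ψ t := by
    have := intervalIntegral.integral_eq_sub_of_hasDerivAt
      (f := fun s : ℝ => f (xstar + s • v)) (f' := ψ)
      (fun t _ => hφ t) (hψcont.intervalIntegrable 0 1)
    rw [this]; simp [hv]
  rw [hftc]
  have hInt : IntervalIntegrable (fun t : ℝ => L * ‖v‖ ^ 2 * t) volume 0 1 :=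
    (continuous_const.mul continuous_id).intervalIntegrable 0 1
  have hae : ∀ᵐ (t : ℝ) ∂(volume.restrict (Set.uIoc (0:ℝ) 1)), ‖ψ t‖ ≤ L * ‖v‖ ^ 2 * t := by
    rw [MeasureTheory.ae_restrict_iff' measurableSet_uIoc]
    refine Filter.Eventually.of_forall fun t ht => ?_
    rw [Set.uIoc_of_le zero_le_one] at ht
    calc ‖ψ t‖ = |ψ t| := rfl
      _ ≤ L * ‖v‖ ^ 2 * |t| := hlin t
      _ = L * ‖v‖ ^ 2 * t := by rw [abs_of_pos ht.1]
  have hval : (∫ t in (0:ℝ)..1, L * ‖v‖ ^ 2 * t) = L / 2 * ‖v‖ ^ 2 := by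
    rw [intervalIntegral.integral_const_mul]
    rw [show (∫ t in (0:ℝ)..1, t) = ((1:ℝ)^2 - 0^2)/2 from integral_id]
    ring
  have hmain := intervalIntegral.norm_integral_le_of_norm_le zero_le_one
    (by rw [← Set.uIoc_of_le zero_le_one]; exact (MeasureTheory.ae_restrict_iff' measurableSet_uIoc).mp hae) hInt
  rw [hval] at hmain
  exact hmain

theorem grad_zero {n : ℕ} (f : EuclideanSpace ℝ (Fin n) → ℝ) (x : EuclideanSpace ℝ (Fin n))
    (h : gradient f x = 0) : fderiv ℝ f x = 0 := by
  have : (InnerProductSpace.toDual ℝ (EuclideanSpace ℝ (Fin n))).symm (fderiv ℝ f x) = 0 := h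
  have := congrArg (InnerProductSpace.toDual ℝ (EuclideanSpace ℝ (Fin n))) this
  simpa using this


theorem gauss_eq {n : ℕ} (m : EuclideanSpace ℝ (Fin n)) {L : ℝ} (hL : 0 < L)
    (x : EuclideanSpace ℝ (Fin n)) :
    gaussDensity m (1/L) x = (2 * π / L) ^ (-(n : ℝ) / 2) * rexp (-(L/2) * ‖x - m‖ ^ 2) := by
  unfold gaussDensity
  rw [mul_one_div]
  congr 1
  congr 1
  field_simp

theorem gauss_norm {n : ℕ} (m : EuclideanSpace ℝ (Fin n)) {L : ℝ} (hL : 0 < L) :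
    (∫ x, gaussDensity m (1/L) x) = 1 := by
  have h2 : (0:ℝ) < 2 * π / L := by positivity
  have hL2 : (0:ℝ) < L / 2 := by positivity
  calc (∫ x, gaussDensity m (1/L) x)
      = ∫ x : EuclideanSpace ℝ (Fin n),
          (2 * π / L) ^ (-(n : ℝ) / 2) * rexp (-(L/2) * ‖x - m‖ ^ 2) := by
        exact integral_congr_ae (Filter.Eventually.of_forall fun x => gauss_eq m hL x)
    _ = (2 * π / L) ^ (-(n : ℝ) / 2) * ∫ x : EuclideanSpace ℝ (Fin n), rexp (-(L/2) * ‖x - m‖ ^ 2) :=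
        integral_const_mul _ _
    _ = (2 * π / L) ^ (-(n : ℝ) / 2) * (2 * π / L) ^ ((n:ℝ)/2) := by
        rw [integral_sub_right_eq_self (fun v : EuclideanSpace ℝ (Fin n) => rexp (-(L/2) * ‖v‖^2)) m,
          GaussianFourier.integral_rexp_neg_mul_sq_norm hL2, finrank_euclideanSpace_fin]
        congr 2
        field_simp
    _ = 1 := by
        rw [← Real.rpow_add h2, neg_div, neg_add_cancel, Real.rpow_zero]

/-- Lemma `Lem:KLEstimate`: KL divergence of a Gaussian centered at a
stationary point of `f`. -/
theorem kl_gaussian_estimate {n : ℕ} (f : EuclideanSpace ℝ (Fin n) → ℝ) (L : ℝ)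
    (hL : 0 < L)
    (hprob : (∫ x, Real.exp (-f x)) = 1)
    (hsmooth : LSmooth f L)
    (xstar : EuclideanSpace ℝ (Fin n)) (hstar : gradient f xstar = 0) :
    KLdiv (gaussDensity xstar (1 / L)) (fun x => Real.exp (-f x)) ≤
      f xstar + ((n : ℝ) / 2) * Real.log (L / (2 * Real.pi)) := by
  obtain ⟨hf2, hhess⟩ := hsmooth
  have hfd0 : fderiv ℝ f xstar = 0 := grad_zero f xstar hstar
  have hT : ∀ x, |f x - f xstar| ≤ L / 2 * ‖x - xstar‖ ^ 2 :=
    taylor_bound f L hf2 hhess hL.le xstar hfd0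
  have hL2 : (0:ℝ) < L / 2 := by positivity
  have h2piL : (0:ℝ) < 2 * π / L := by positivity
  set c : ℝ := (2 * π / L) ^ (-(n : ℝ) / 2) with hc_def
  have hc : 0 < c := Real.rpow_pos_of_pos h2piL _
  set ρ : EuclideanSpace ℝ (Fin n) → ℝ := gaussDensity xstar (1/L) with hρ_def
  set q : EuclideanSpace ℝ (Fin n) → ℝ := fun x => ‖x - xstar‖ ^ 2 with hq_def
  have hρx : ∀ x, ρ x = c * rexp (-(L/2) * q x) := fun x => gauss_eq xstar hL x
  have hρpos : ∀ x, 0 < ρ x := fun x => by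
    rw [hρx x]; positivity
  have hρcont : Continuous ρ := by
    have : Continuous fun x : EuclideanSpace ℝ (Fin n) => c * rexp (-(L/2) * q x) := by
      apply continuous_const.mul
      apply Real.continuous_exp.comp
      apply continuous_const.mul
      exact ((continuous_id.sub continuous_const).norm.pow 2)
    exact this.congr fun x => (hρx x).symm
  have hfcont : Continuous f := hf2.continuous
  -- integrability
  have hgi := gint (n := n) hL2
  have hgi2 := gint2 (n := n) hL2
  have ig1 : Integrable ρ := by
    refine ((hgi.comp_sub_right xstar).const_mul c).congr
      (Filter.Eventually.of_forall fun x => ?_)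
    exact (hρx x).symm
  have ig2 : Integrable (fun x => ρ x * q x) := by
    refine ((hgi2.comp_sub_right xstar).const_mul c).congr
      (Filter.Eventually.of_forall fun x => ?_)
    simp only [hρx x, hq_def]
    ring
  have hfb : ∀ x, |f x| ≤ |f xstar| + L / 2 * q x := fun x => by
    have h1 := hT x
    have h2 : |f x| - |f xstar| ≤ |f x - f xstar| := by
      have := abs_sub_abs_le_abs_sub (f x) (f xstar); linarith
    simp only [hq_def]; linarith
  have igf : Integrable (fun x => ρ x * f x) := by
    refine Integrable.mono ((ig1.const_mul |f xstar|).add (ig2.const_mul (L/2)))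
      (hρcont.mul hfcont).aestronglyMeasurable
      (Filter.Eventually.of_forall fun x => ?_)
    have h1 : ‖ρ x * f x‖ = ρ x * |f x| := by
      rw [norm_mul, Real.norm_eq_abs, Real.norm_eq_abs, abs_of_pos (hρpos x)]
    have h2 : ρ x * |f x| ≤ |f xstar| * ρ x + L / 2 * (ρ x * q x) := by
      have := mul_le_mul_of_nonneg_left (hfb x) (hρpos x).le
      nlinarith [hρpos x]
    have h3 : |f xstar| * ρ x + L / 2 * (ρ x * q x)
        ≤ ‖|f xstar| * ρ x + L / 2 * (ρ x * q x)‖ := le_abs_self _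
    calc ‖ρ x * f x‖ = ρ x * |f x| := h1
      _ ≤ |f xstar| * ρ x + L / 2 * (ρ x * q x) := h2
      _ ≤ ‖|f xstar| * ρ x + L / 2 * (ρ x * q x)‖ := h3
  have igRHS : Integrable (fun x => ρ x * (f xstar + L / 2 * q x)) := by
    have h1 : Integrable (fun x => f xstar * ρ x + L / 2 * (ρ x * q x)) :=
      (ig1.const_mul (f xstar)).add (ig2.const_mul (L/2))
    refine h1.congr (Filter.Eventually.of_forall fun x => ?_)
    ring
  -- pointwise identity for the KL integrand
  have hpt : ∀ x, ρ x * Real.log (ρ x / rexp (-f x))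
      = Real.log c * ρ x + ρ x * f x - L / 2 * (ρ x * q x) := fun x => by
    rw [Real.log_div (hρpos x).ne' (Real.exp_ne_zero _), Real.log_exp, hρx x,
      Real.log_mul hc.ne' (Real.exp_ne_zero _), Real.log_exp]
    ring
  have hnorm : (∫ x, ρ x) = 1 := gauss_norm xstar hL
  have hKL : KLdiv ρ (fun x => rexp (-f x))
      = Real.log c * (∫ x, ρ x) + (∫ x, ρ x * f x) - L / 2 * ∫ x, ρ x * q x := by
    calc KLdiv ρ (fun x => rexp (-f x))
        = ∫ x, (Real.log c * ρ x + ρ x * f x - L / 2 * (ρ x * q x)) :=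
          integral_congr_ae (Filter.Eventually.of_forall fun x => hpt x)
      _ = _ := by
          have iA : Integrable (fun x => Real.log c * ρ x + ρ x * f x) :=
            (ig1.const_mul _).add igf
          have iB : Integrable (fun x => L / 2 * (ρ x * q x)) := ig2.const_mul _
          rw [integral_sub iA iB, integral_add (ig1.const_mul _) igf,
            integral_const_mul, integral_const_mul]
  have hmono : (∫ x, ρ x * f x) ≤ ∫ x, ρ x * (f xstar + L / 2 * q x) := by
    refine integral_mono igf igRHS fun x => ?_
    have hx := hT x
    have : f x ≤ f xstar + L / 2 * q x := by
      simp only [hq_def]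
      have := abs_le.mp hx
      linarith [this.2]
    exact mul_le_mul_of_nonneg_left this (hρpos x).le
  have hsum : (∫ x, ρ x * (f xstar + L / 2 * q x))
      = f xstar * (∫ x, ρ x) + L / 2 * ∫ x, ρ x * q x := by
    calc (∫ x, ρ x * (f xstar + L / 2 * q x))
        = ∫ x, (f xstar * ρ x + L / 2 * (ρ x * q x)) :=
          integral_congr_ae (Filter.Eventually.of_forall fun x => by ring)
      _ = _ := by
          have iA : Integrable (fun x => f xstar * ρ x) := ig1.const_mul _
          have iB : Integrable (fun x => L / 2 * (ρ x * q x)) := ig2.const_mul _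
          rw [integral_add iA iB, integral_const_mul, integral_const_mul]
  have hlogc : Real.log c = (n : ℝ) / 2 * Real.log (L / (2 * π)) := by
    rw [hc_def, Real.log_rpow h2piL,
      Real.log_div (by positivity) hL.ne', Real.log_div hL.ne' (by positivity)]
    ring
  rw [hKL, hnorm, hlogc]
  rw [hnorm] at hsum
  linarith [hmono, hsum]
end
end
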